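/- arXiv:1502.04843 — 3 statements merged into one kernel-verified Lean document; each statement's English description precedes it below -/
import Mathlib

section
/- Fix a time series x ∈ ℝ^k with 1 ≤ k ≤ n, a label y ∈ {−1,+1}, a margin ξ ≥ 0, and an elasticity m ≥ 1. The elastic margin perceptron loss ℓ(W,b) = max(0, ξ − y·(b + σ_W(x))) is piecewise smooth on ℝ^{n×m} × ℝ: it is continuous, and for every (W,b) its value lies in the finite set {0} ∪ {ξ − y·(b + ⟨x⊗_φ0, W⟩) : φ ∈ P(k,m)}, each member of which is a smooth (affine) function of (W,b). -/
/-- A warping path in the grid `[k] × [m]` (1-based points): starts at `(1,1)`,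
ends at `(k,m)`, stays inside the grid, and each step is `(1,0)`, `(0,1)` or `(1,1)`. -/
def IsWarpingPath (k m : ℕ) (φ : List (ℕ × ℕ)) : Prop :=
  φ.head? = some (1, 1) ∧ φ.getLast? = some (k, m) ∧
  (∀ t ∈ φ, 1 ≤ t.1 ∧ t.1 ≤ k ∧ 1 ≤ t.2 ∧ t.2 ≤ m) ∧
  ∀ (l : ℕ) (h : l + 1 < φ.length),
    ((φ[l + 1]'h).1 = (φ[l]'(Nat.lt_of_succ_lt h)).1 + 1 ∧
       (φ[l + 1]'h).2 = (φ[l]'(Nat.lt_of_succ_lt h)).2) ∨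
    ((φ[l + 1]'h).1 = (φ[l]'(Nat.lt_of_succ_lt h)).1 ∧
       (φ[l + 1]'h).2 = (φ[l]'(Nat.lt_of_succ_lt h)).2 + 1) ∨
    ((φ[l + 1]'h).1 = (φ[l]'(Nat.lt_of_succ_lt h)).1 + 1 ∧
       (φ[l + 1]'h).2 = (φ[l]'(Nat.lt_of_succ_lt h)).2 + 1)

/-- `P(k,m)`: the set of all warping paths in the grid `[k] × [m]`. -/
def WarpingPaths (k m : ℕ) : Set (List (ℕ × ℕ)) := {φ | IsWarpingPath k m φ}

/-- Value of a time series at a (0-based) natural index, `0` out of bounds. -/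
def nth {k : ℕ} (x : Fin k → ℝ) (i : ℕ) : ℝ := if h : i < k then x ⟨i, h⟩ else 0

/-- Entry of a matrix at (0-based) natural indices, `0` out of bounds. -/
def entry {n m : ℕ} (W : Fin n → Fin m → ℝ) (i j : ℕ) : ℝ :=
  if h : i < n ∧ j < m then W ⟨i, h.1⟩ ⟨j, h.2⟩ else 0

/-- Elastic embedding `x ⊗_φ Z` of a time series `x ∈ ℝ^k` (`k ≤ n`) into the
matrix `Z ∈ ℝ^{n×m}` along the warping path `φ` (points of `φ` are 1-based). -/
def embed {n m k : ℕ} (x : Fin k → ℝ) (φ : List (ℕ × ℕ)) (Z : Fin n → Fin m → ℝ) :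
    Fin n → Fin m → ℝ :=
  fun i j => if ((i : ℕ) + 1, (j : ℕ) + 1) ∈ φ then nth x i else Z i j

/-- Frobenius inner product on `ℝ^{n×m}`. -/
def frobInner {n m : ℕ} (X Y : Fin n → Fin m → ℝ) : ℝ := ∑ i, ∑ j, X i j * Y i j

/-- Frobenius norm on `ℝ^{n×m}`. -/
noncomputable def frobNorm {n m : ℕ} (X : Fin n → Fin m → ℝ) : ℝ :=
  Real.sqrt (frobInner X X)

/-- Elastic inner product `σ_W(x) = max_{φ ∈ P(k,m)} ⟨x ⊗_φ 0, W⟩`. -/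
noncomputable def elasticIP {n m k : ℕ} (W : Fin n → Fin m → ℝ) (x : Fin k → ℝ) : ℝ :=
  sSup ((fun φ => frobInner (embed x φ (0 : Fin n → Fin m → ℝ)) W) '' WarpingPaths k m)

/-- Elastic Euclidean distance `δ_Y(x) = min_{φ ∈ P(k,m)} ‖x ⊗_φ Y − Y‖`. -/
noncomputable def elasticDist {n m k : ℕ} (Y : Fin n → Fin m → ℝ) (x : Fin k → ℝ) : ℝ :=
  sInf ((fun φ => frobNorm (embed x φ Y - Y)) '' WarpingPaths k m)

/-- DTW distance `d(x,z) = min_{φ ∈ P(k,m)} sqrt(Σ_{(i,j) ∈ φ} (x_i − z_j)²)`. -/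
noncomputable def dtw {k m : ℕ} (x : Fin k → ℝ) (z : Fin m → ℝ) : ℝ :=
  sInf ((fun φ : List (ℕ × ℕ) =>
      Real.sqrt (∑ t ∈ φ.toFinset, (nth x (t.1 - 1) - nth z (t.2 - 1)) ^ 2)) ''
    WarpingPaths k m)

lemma warpingPaths_nonempty' (k m : ℕ) (hk : 1 ≤ k) (hm : 1 ≤ m) :
    (WarpingPaths k m).Nonempty := by
  refine ⟨(List.range (k + m - 1)).map
    (fun l => (min (l + 1) k, l + 2 - min (l + 1) k)), ?_, ?_, ?_, ?_⟩
  · rw [List.head?_map]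
    obtain ⟨N, hN⟩ : ∃ N, k + m - 1 = N + 1 := ⟨k + m - 2, by omega⟩
    rw [hN]
    simp [List.range_succ_eq_map]
    omega
  · rw [List.getLast?_map]
    obtain ⟨N, hN⟩ : ∃ N, k + m - 1 = N + 1 := ⟨k + m - 2, by omega⟩
    rw [hN]
    simp [List.range_succ]
    constructor <;> omega
  · intro t ht
    simp only [List.mem_map, List.mem_range] at ht
    obtain ⟨l, hl, rfl⟩ := ht
    refine ⟨by simp; omega, by simp, by simp; omega, by simp; omega⟩
  · intro l h
    simp only [List.length_map, List.length_range] at h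
    simp only [List.getElem_map, List.getElem_range]
    rcases lt_or_ge (l + 1) k with hc | hc
    · left
      constructor <;> omega
    · right; left
      constructor <;> omega

def maskEmbed' {n m k : ℕ} (x : Fin k → ℝ) (s : Fin n → Fin m → Bool) : Fin n → Fin m → ℝ :=
  fun i j => if s i j then nth x i else 0

lemma embed_eq_mask' {n m k : ℕ} (x : Fin k → ℝ) (φ : List (ℕ × ℕ)) :
    embed x φ (0 : Fin n → Fin m → ℝ) =
      maskEmbed' x (fun i j => decide (((i : ℕ) + 1, (j : ℕ) + 1) ∈ φ)) := by
  funext i j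
  simp [embed, maskEmbed']

/-- The elastic margin perceptron loss
`ℓ(W,b) = max(0, ξ − y·(b + σ_W(x)))` is piecewise smooth on `ℝ^{n×m} × ℝ`:
it is continuous, its value at every `(W,b)` lies in the finite set
`{0} ∪ {ξ − y·(b + ⟨x⊗_φ0, W⟩) : φ ∈ P(k,m)}`, and each member of this set is a
smooth (affine) function of `(W,b)`. -/
theorem elastic_margin_loss_piecewiseSmooth (n m k : ℕ) (hk1 : 1 ≤ k) (hkn : k ≤ n)
    (hm : 1 ≤ m) (x : Fin k → ℝ) (y : ℝ) (hy : y = 1 ∨ y = -1) (ξ : ℝ) (hξ : 0 ≤ ξ) :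
    Continuous (fun p : (Fin n → Fin m → ℝ) × ℝ =>
      max 0 (ξ - y * (p.2 + elasticIP p.1 x))) ∧
    (∀ p : (Fin n → Fin m → ℝ) × ℝ,
      max 0 (ξ - y * (p.2 + elasticIP p.1 x)) = 0 ∨
      ∃ φ ∈ WarpingPaths k m,
        max 0 (ξ - y * (p.2 + elasticIP p.1 x)) =
          ξ - y * (p.2 + frobInner (embed x φ (0 : Fin n → Fin m → ℝ)) p.1)) ∧
    (∀ φ ∈ WarpingPaths k m,
      ContDiff ℝ (⊤ : ℕ∞) (fun p : (Fin n → Fin m → ℝ) × ℝ =>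
        ξ - y * (p.2 + frobInner (embed x φ (0 : Fin n → Fin m → ℝ)) p.1))) := by
  have hPne : (WarpingPaths k m).Nonempty := warpingPaths_nonempty' k m hk1 hm
  set A : Set (Fin n → Fin m → ℝ) :=
    (fun φ => embed x φ (0 : Fin n → Fin m → ℝ)) '' WarpingPaths k m with hA
  have hAfin : A.Finite := by
    apply Set.Finite.subset (Set.finite_range (maskEmbed' (n := n) (m := m) x))
    rintro _ ⟨φ, _, rfl⟩
    exact ⟨_, (embed_eq_mask' x φ).symm⟩
  have hAne : A.Nonempty := hPne.image _
  have hne : hAfin.toFinset.Nonempty := hAfin.toFinset_nonempty.mpr hAne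
  have himg : ∀ W : Fin n → Fin m → ℝ,
      (fun φ => frobInner (embed x φ (0 : Fin n → Fin m → ℝ)) W) '' WarpingPaths k m
        = (fun M => frobInner M W) '' A := by
    intro W
    rw [hA, Set.image_image]
  have hkey : ∀ W : Fin n → Fin m → ℝ, elasticIP W x =
      hAfin.toFinset.sup' hne (fun M => frobInner M W) := by
    intro W
    rw [Finset.sup'_eq_csSup_image, hAfin.coe_toFinset]
    unfold elasticIP
    rw [himg W]
  have hcontInner : ∀ M : Fin n → Fin m → ℝ,
      Continuous (fun p : (Fin n → Fin m → ℝ) × ℝ => frobInner M p.1) := by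
    intro M
    unfold frobInner
    apply continuous_finset_sum
    intro i _
    apply continuous_finset_sum
    intro j _
    exact continuous_const.mul (by fun_prop)
  refine ⟨?_, ?_, ?_⟩
  · apply continuous_const.max
    apply continuous_const.sub
    apply continuous_const.mul
    have heq : (fun p : (Fin n → Fin m → ℝ) × ℝ => p.2 + elasticIP p.1 x) =
        fun p : (Fin n → Fin m → ℝ) × ℝ =>
          p.2 + hAfin.toFinset.sup' hne (fun M => frobInner M p.1) := by
      funext p
      rw [hkey]
    rw [heq]
    exact continuous_snd.add
      (Continuous.finset_sup'_apply hne (fun M _ => hcontInner M))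
  · intro p
    rcases le_or_gt (ξ - y * (p.2 + elasticIP p.1 x)) 0 with h | h
    · left
      exact max_eq_left h
    · right
      have hmem : elasticIP p.1 x ∈
          (fun φ => frobInner (embed x φ (0 : Fin n → Fin m → ℝ)) p.1) ''
            WarpingPaths k m := by
        unfold elasticIP
        apply Set.Nonempty.csSup_mem (hPne.image _)
        rw [himg p.1]
        exact hAfin.image _
      obtain ⟨φ, hφ, hval⟩ := hmem
      have hval' : frobInner (embed x φ (0 : Fin n → Fin m → ℝ)) p.1 = elasticIP p.1 x := hval
      exact ⟨φ, hφ, by rw [max_eq_right h.le, hval']⟩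
  · intro φ hφ
    apply contDiff_const.sub
    apply ContDiff.mul contDiff_const
    apply ContDiff.add contDiff_snd
    unfold frobInner
    apply ContDiff.sum
    intro i _
    apply ContDiff.sum
    intro j _
    exact ContDiff.mul contDiff_const (by fun_prop)
end

section
/- Fix a time series x ∈ ℝ^k with 1 ≤ k ≤ n, a margin ξ ≥ 0, and an elasticity m ≥ 1. For a negatively labeled example (y = −1), the elastic margin perceptron loss (W, b) ↦ max(0, ξ − y·(b + σ_W(x))) = max(0, ξ + b + σ_W(x)) is a convex function on ℝ^{n×m} × ℝ. -/
/-! The elastic inner product `σ_W(x)` is a pointwise supremum of the linear functionals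
`W ↦ ⟨x ⊗_φ 0, W⟩`, hence convex in `W`; adding the affine term `ξ + b` and taking the maximum
with `0` preserves convexity. -/

/-- For empty `s` the supremum is the junk value `sSup ∅ = 0`, a constant function. -/
theorem convexOn_sSup_image {ι E : Type*} [AddCommMonoid E] [Module ℝ E] {t : Set E}
    {f : ι → E → ℝ} (s : Set ι) (hf : ∀ i ∈ s, ConvexOn ℝ t (f i))
    (hbdd : ∀ w ∈ t, BddAbove ((f · w) '' s)) (ht : Convex ℝ t) :
    ConvexOn ℝ t (fun w => sSup ((f · w) '' s)) := by
  rcases s.eq_empty_or_nonempty with rfl | hs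
  · simpa using convexOn_const (0 : ℝ) ht
  refine ⟨ht, fun v hv w hw a b ha hb hab => ?_⟩
  refine csSup_le (hs.image _) ?_
  rintro _ ⟨i, hi, rfl⟩
  calc f i (a • v + b • w) ≤ a • f i v + b • f i w := (hf i hi).2 hv hw ha hb hab
    _ ≤ a • sSup ((f · v) '' s) + b • sSup ((f · w) '' s) := by
      gcongr
      · exact le_csSup (hbdd v hv) ⟨i, hi, rfl⟩
      · exact le_csSup (hbdd w hw) ⟨i, hi, rfl⟩

def frobInnerₗ {n m : ℕ} (M : Fin n → Fin m → ℝ) : (Fin n → Fin m → ℝ) →ₗ[ℝ] ℝ where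
  toFun := frobInner M
  map_add' W V := by
    simp only [frobInner, Pi.add_apply, mul_add, Finset.sum_add_distrib]
  map_smul' a W := by
    simp only [frobInner, Pi.smul_apply, smul_eq_mul, RingHom.id_apply, Finset.mul_sum]
    exact Finset.sum_congr rfl fun i _ => Finset.sum_congr rfl fun j _ => by ring

theorem abs_embed_zero_le {n m k : ℕ} (x : Fin k → ℝ) (φ : List (ℕ × ℕ)) (i : Fin n)
    (j : Fin m) : |embed x φ 0 i j| ≤ |nth x (i : ℕ)| := by
  unfold embed
  split_ifs <;> simp

theorem frobInner_embed_zero_le {n m k : ℕ} (x : Fin k → ℝ) (φ : List (ℕ × ℕ))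
    (W : Fin n → Fin m → ℝ) :
    frobInner (embed x φ 0) W ≤ ∑ i : Fin n, ∑ j : Fin m, |nth x (i : ℕ)| * |W i j| := by
  refine Finset.sum_le_sum fun i _ => Finset.sum_le_sum fun j _ => ?_
  calc embed x φ 0 i j * W i j ≤ |embed x φ 0 i j| * |W i j| := by
        rw [← abs_mul]; exact le_abs_self _
    _ ≤ |nth x (i : ℕ)| * |W i j| :=
        mul_le_mul_of_nonneg_right (abs_embed_zero_le x φ i j) (abs_nonneg _)

theorem convexOn_elasticIP {n m k : ℕ} (x : Fin k → ℝ) :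
    ConvexOn ℝ Set.univ (fun W : Fin n → Fin m → ℝ => elasticIP W x) := by
  refine convexOn_sSup_image _ (fun φ _ => (frobInnerₗ (embed x φ 0)).convexOn convex_univ)
    (fun W _ => ⟨∑ i : Fin n, ∑ j : Fin m, |nth x (i : ℕ)| * |W i j|, ?_⟩) convex_univ
  rintro _ ⟨φ, _, rfl⟩
  exact frobInner_embed_zero_le x φ W

theorem elastic_margin_loss_convex_of_neg_label_general (n m k : ℕ) (x : Fin k → ℝ) (ξ : ℝ) :
    ConvexOn ℝ Set.univ (fun p : (Fin n → Fin m → ℝ) × ℝ =>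
      max 0 (ξ - (-1 : ℝ) * (p.2 + elasticIP p.1 x))) := by
  have hσ : ConvexOn ℝ Set.univ (fun p : (Fin n → Fin m → ℝ) × ℝ => elasticIP p.1 x) :=
    (convexOn_elasticIP x).comp_linearMap (LinearMap.fst ℝ (Fin n → Fin m → ℝ) ℝ)
  have hb : ConvexOn ℝ Set.univ (fun p : (Fin n → Fin m → ℝ) × ℝ => p.2) :=
    (LinearMap.snd ℝ (Fin n → Fin m → ℝ) ℝ).convexOn convex_univ
  have hloss := (convexOn_const (0 : ℝ) convex_univ).sup ((hb.add hσ).add_const ξ)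
  refine hloss.congr fun p _ => ?_
  simp only [Pi.sup_apply, Pi.add_apply]
  congr 1
  ring

/-- For a negatively labeled example (`y = −1`), the elastic margin
perceptron loss `(W, b) ↦ max(0, ξ − y·(b + σ_W(x))) = max(0, ξ + b + σ_W(x))` is
convex on `ℝ^{n×m} × ℝ`. -/
theorem elastic_margin_loss_convex_of_neg_label (n m k : ℕ) (hk1 : 1 ≤ k) (hkn : k ≤ n)
    (hm : 1 ≤ m) (x : Fin k → ℝ) (ξ : ℝ) (hξ : 0 ≤ ξ) :
    ConvexOn ℝ Set.univ (fun p : (Fin n → Fin m → ℝ) × ℝ =>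
      max 0 (ξ - (-1 : ℝ) * (p.2 + elasticIP p.1 x))) :=
  elastic_margin_loss_convex_of_neg_label_general n m k x ξ
end

section
/- Let x_1, …, x_N be time series with x_i ∈ ℝ^{k_i} and 1 ≤ k_i ≤ n, fix an elasticity m ≥ 1, and define F : ℝ^{n×m} → ℝ by F(Y) = Σ_{i=1}^N min_{φ ∈ P(k_i,m)} ‖x_i⊗_φY − Y‖². If Y ∈ ℝ^{n×m} is a matrix all of whose n rows equal y ∈ ℝ^m, then F(Y) = Σ_{i=1}^N d(x_i, y)², the sum of squared DTW distances of the x_i to y. -/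
/-!
With all rows of `Y` equal to `y`, the matrix `x ⊗_φ Y − Y` vanishes off `φ` and has entry
`x_i − y_j` at `(i, j) ∈ φ`, so `‖x ⊗_φ Y − Y‖²` is exactly the DTW cost of the warping path `φ`.
Minimising over `φ` then gives `d(x, y)²`, because the minimum commutes with the monotone,
continuous square root.
-/

theorem Real.sqrt_sInf {S : Set ℝ} (hS : BddBelow S) : √(sInf S) = sInf (Real.sqrt '' S) := by
  rcases S.eq_empty_or_nonempty with rfl | hne
  · simp
  · exact Monotone.map_csInf_of_continuousAt Real.continuous_sqrt.continuousAt
      (fun _ _ => Real.sqrt_le_sqrt) hne hS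

theorem frobNorm_sq {n m : ℕ} (X : Fin n → Fin m → ℝ) :
    frobNorm X ^ 2 = ∑ i, ∑ j, X i j ^ 2 := by
  have hsq : frobInner X X = ∑ i, ∑ j, X i j ^ 2 := by simp only [frobInner, sq]
  rw [frobNorm, hsq, Real.sq_sqrt (by positivity)]

theorem embed_sub_self_apply {n m k : ℕ} (x : Fin k → ℝ) (φ : List (ℕ × ℕ))
    (Z : Fin n → Fin m → ℝ) (i : Fin n) (j : Fin m) :
    (embed x φ Z - Z) i j = if ((i : ℕ) + 1, (j : ℕ) + 1) ∈ φ then nth x i - Z i j else 0 := by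
  simp only [Pi.sub_apply, embed]
  split_ifs <;> simp

theorem sum_fin_grid_ite_mem {M : Type*} [AddCommMonoid M] {n m : ℕ} (s : Finset (ℕ × ℕ))
    (hs : ∀ t ∈ s, 1 ≤ t.1 ∧ t.1 ≤ n ∧ 1 ≤ t.2 ∧ t.2 ≤ m) (f : ℕ × ℕ → M) :
    ∑ i : Fin n, ∑ j : Fin m,
        (if ((i : ℕ) + 1, (j : ℕ) + 1) ∈ s then f ((i : ℕ) + 1, (j : ℕ) + 1) else 0)
      = ∑ t ∈ s, f t := by
  let shift : Fin n × Fin m ↪ ℕ × ℕ :=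
    ⟨fun p => ((p.1 : ℕ) + 1, (p.2 : ℕ) + 1), fun p q h => by
      simp only [Prod.mk.injEq, add_left_inj] at h
      exact Prod.ext (Fin.ext h.1) (Fin.ext h.2)⟩
  have hsub : s ⊆ Finset.univ.map shift := fun t ht => by
    obtain ⟨h1, h2, h3, h4⟩ := hs t ht
    refine Finset.mem_map.mpr ⟨(⟨t.1 - 1, by omega⟩, ⟨t.2 - 1, by omega⟩), Finset.mem_univ _, ?_⟩
    change (t.1 - 1 + 1, t.2 - 1 + 1) = t
    ext <;> dsimp only <;> omega
  calc ∑ i : Fin n, ∑ j : Fin m,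
        (if ((i : ℕ) + 1, (j : ℕ) + 1) ∈ s then f ((i : ℕ) + 1, (j : ℕ) + 1) else 0)
      = ∑ t ∈ Finset.univ.map shift, if t ∈ s then f t else 0 := by
        rw [Finset.sum_map, ← Finset.univ_product_univ, Finset.sum_product]
        rfl
    _ = ∑ t ∈ s, f t := by rw [Finset.sum_ite_mem, Finset.inter_eq_right.mpr hsub]

theorem frobNorm_embed_constRows_sub_sq {n m k : ℕ} (hkn : k ≤ n) (x : Fin k → ℝ)
    (y : Fin m → ℝ) {φ : List (ℕ × ℕ)} (hφ : ∀ t ∈ φ, 1 ≤ t.1 ∧ t.1 ≤ k ∧ 1 ≤ t.2 ∧ t.2 ≤ m) :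
    frobNorm (embed x φ (fun _ : Fin n => y) - fun _ : Fin n => y) ^ 2
      = ∑ t ∈ φ.toFinset, (nth x (t.1 - 1) - nth y (t.2 - 1)) ^ 2 := by
  have hs : ∀ t ∈ φ.toFinset, 1 ≤ t.1 ∧ t.1 ≤ n ∧ 1 ≤ t.2 ∧ t.2 ≤ m := fun t ht => by
    have := hφ t (List.mem_toFinset.mp ht); omega
  rw [frobNorm_sq, ← sum_fin_grid_ite_mem _ hs]
  refine Finset.sum_congr rfl fun i _ => Finset.sum_congr rfl fun j _ => ?_
  simp only [embed_sub_self_apply, List.mem_toFinset]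
  split_ifs <;> simp [nth]

theorem sInf_frobNorm_embed_constRows_sub_sq_eq_dtw_sq {n m k : ℕ} (hkn : k ≤ n)
    (x : Fin k → ℝ) (y : Fin m → ℝ) :
    sInf ((fun φ : List (ℕ × ℕ) =>
        frobNorm (embed x φ (fun _ : Fin n => y) - fun _ : Fin n => y) ^ 2) ''
      WarpingPaths k m) = dtw x y ^ 2 := by
  set cost := fun φ : List (ℕ × ℕ) =>
    ∑ t ∈ φ.toFinset, (nth x (t.1 - 1) - nth y (t.2 - 1)) ^ 2
  have hcost_nonneg : ∀ c ∈ cost '' WarpingPaths k m, 0 ≤ c := by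
    rintro _ ⟨φ, -, rfl⟩
    positivity
  have hdtw : dtw x y = √(sInf (cost '' WarpingPaths k m)) := by
    rw [Real.sqrt_sInf ⟨0, hcost_nonneg⟩, ← Set.image_comp]
    rfl
  rw [Set.image_congr fun φ hφ => frobNorm_embed_constRows_sub_sq hkn x y hφ.2.2.1, hdtw,
    Real.sq_sqrt (Real.sInf_nonneg hcost_nonneg)]

theorem sum_min_embed_sq_dist_constRows_eq_sum_dtw_sq_general (n m N : ℕ)
    (k : Fin N → ℕ) (hkn : ∀ i, k i ≤ n)
    (x : (i : Fin N) → Fin (k i) → ℝ) (y : Fin m → ℝ) :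
    ∑ i : Fin N,
        sInf ((fun φ : List (ℕ × ℕ) =>
            frobNorm (embed (x i) φ (fun _ : Fin n => y) - fun _ : Fin n => y) ^ 2) ''
          WarpingPaths (k i) m)
      = ∑ i : Fin N, dtw (x i) y ^ 2 :=
  Finset.sum_congr rfl fun i _ => sInf_frobNorm_embed_constRows_sub_sq_eq_dtw_sq (hkn i) (x i) y

/-- For `F(Y) = Σ_{i=1}^N min_{φ ∈ P(k_i,m)} ‖x_i ⊗_φ Y − Y‖²`, if all
`n` rows of `Y` equal `y ∈ ℝ^m`, then `F(Y) = Σ_{i=1}^N d(x_i, y)²`, the sum of squared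
DTW distances of the `x_i` to `y`. -/
theorem sum_min_embed_sq_dist_constRows_eq_sum_dtw_sq (n m N : ℕ) (hm : 1 ≤ m)
    (k : Fin N → ℕ) (hk1 : ∀ i, 1 ≤ k i) (hkn : ∀ i, k i ≤ n)
    (x : (i : Fin N) → Fin (k i) → ℝ) (y : Fin m → ℝ) :
    ∑ i : Fin N,
        sInf ((fun φ : List (ℕ × ℕ) =>
            frobNorm (embed (x i) φ (fun _ : Fin n => y) - fun _ : Fin n => y) ^ 2) ''
          WarpingPaths (k i) m)
      = ∑ i : Fin N, dtw (x i) y ^ 2 :=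
  sum_min_embed_sq_dist_constRows_eq_sum_dtw_sq_general n m N k hkn x y
end
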